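/- Let i be a state for which there exist d in {1,...,n} and an input j such that i is in the union of N_d^j and P_d^j and exactly one of the sets N_d^j, P_d^j is empty. Then i is sign strictly herdable: for every pair (A',B') with the same sign pattern as (A,B), state i is strictly herdable with respect to the controllability matrix of (A',B'). -/

import Mathlib

/-!
Summing the weights of all walks of length `e + 1` from input `j` to state `i` gives the
entry `(A ^ e * B) i j`, and the sign of a walk's weight, a product of entries of `A` and `B`,
depends only on the sign pattern. So if every walk of length `d` from `j` has positive weight
and one of them ends at `i`, then for every `(A', B')` with the same pattern the `j`-th column
of `A' ^ (d - 1) * B'` is nonnegative with positive `i`-th entry; since `d ≤ n` it is a column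
of the controllability matrix. Replacing `B` by `-B` swaps positive and negative walks, which
reduces the case of only negative walks to this one.
-/

/-- `k` is a walk of length `e + 1` from input `j` to state `i`: it visits the states
`k 0, k 1, …, k e`, ends at `i`, starts along a nonzero entry of `B`, and follows
nonzero entries of `A`. -/
def IsWalk {n m : ℕ} (A : Matrix (Fin n) (Fin n) ℝ) (B : Matrix (Fin n) (Fin m) ℝ)
    (j : Fin m) (i : Fin n) {e : ℕ} (k : Fin (e + 1) → Fin n) : Prop :=
  k (Fin.last e) = i ∧ B (k 0) j ≠ 0 ∧ ∀ t : Fin e, A (k t.succ) (k t.castSucc) ≠ 0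

/-- The weight of the walk `k 0, …, k e` from input `j`:
`B (k 0) j * ∏ₜ A (k (t+1)) (k t)`. -/
def walkWeight {n m : ℕ} (A : Matrix (Fin n) (Fin n) ℝ) (B : Matrix (Fin n) (Fin m) ℝ)
    (j : Fin m) {e : ℕ} (k : Fin (e + 1) → Fin n) : ℝ :=
  B (k 0) j * ∏ t : Fin e, A (k t.succ) (k t.castSucc)

open Classical in
/-- `rho A B j i d` is the sum of the weights of all walks of length `d` from input `j`
to state `i` (zero if there are none, in particular for `d = 0`). -/
noncomputable def rho {n m : ℕ} (A : Matrix (Fin n) (Fin n) ℝ) (B : Matrix (Fin n) (Fin m) ℝ)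
    (j : Fin m) (i : Fin n) : ℕ → ℝ
  | 0 => 0
  | e + 1 => ∑ k : Fin (e + 1) → Fin n,
      if IsWalk A B j i k then walkWeight A B j k else 0

/-- `Pset A B j d` is the set of states reachable from input `j` by at least one walk of
length `d` of positive weight. -/
def Pset {n m : ℕ} (A : Matrix (Fin n) (Fin n) ℝ) (B : Matrix (Fin n) (Fin m) ℝ)
    (j : Fin m) : ℕ → Set (Fin n)
  | 0 => ∅
  | e + 1 => {i | ∃ k : Fin (e + 1) → Fin n, IsWalk A B j i k ∧ 0 < walkWeight A B j k}

/-- `Nset A B j d` is the set of states reachable from input `j` by at least one walk of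
length `d` of negative weight. -/
def Nset {n m : ℕ} (A : Matrix (Fin n) (Fin n) ℝ) (B : Matrix (Fin n) (Fin m) ℝ)
    (j : Fin m) : ℕ → Set (Fin n)
  | 0 => ∅
  | e + 1 => {i | ∃ k : Fin (e + 1) → Fin n, IsWalk A B j i k ∧ walkWeight A B j k < 0}

/-- The controllability matrix `C = [B, AB, …, A^{n-1} B]`; the column indexed by
`(d, j)` is the `j`-th column of `A^d B`. -/
def ctrb {n m : ℕ} (A : Matrix (Fin n) (Fin n) ℝ) (B : Matrix (Fin n) (Fin m) ℝ) :
    Matrix (Fin n) (Fin n × Fin m) ℝ := fun i p => (A ^ (p.1 : ℕ) * B) i p.2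

/-- A vector is unisigned if all of its nonzero entries have the same sign. -/
def Unisigned {n : ℕ} (k : Fin n → ℝ) : Prop :=
  ∀ a b : Fin n, k a ≠ 0 → k b ≠ 0 → Real.sign (k a) = Real.sign (k b)

/-- State `i` is strictly herdable with respect to the pair `(A, B)`: there is a
unisigned vector `k` in the range of the controllability matrix with `k i ≠ 0`. -/
def StrictlyHerdable {n m : ℕ} (A : Matrix (Fin n) (Fin n) ℝ)
    (B : Matrix (Fin n) (Fin m) ℝ) (i : Fin n) : Prop :=
  ∃ k : Fin n → ℝ, (∃ y : Fin n × Fin m → ℝ, (ctrb A B).mulVec y = k) ∧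
    Unisigned k ∧ k i ≠ 0

/-- `(A', B')` has the same sign pattern as `(A, B)`. -/
def SamePattern {n m : ℕ} (A A' : Matrix (Fin n) (Fin n) ℝ)
    (B B' : Matrix (Fin n) (Fin m) ℝ) : Prop :=
  (∀ p q, Real.sign (A' p q) = Real.sign (A p q)) ∧
    (∀ p q, Real.sign (B' p q) = Real.sign (B p q))

section Walks

variable {n m : ℕ} {A : Matrix (Fin n) (Fin n) ℝ} {B : Matrix (Fin n) (Fin m) ℝ} {j : Fin m}

lemma IsWalk.walkWeight_ne_zero {i : Fin n} {e : ℕ} {k : Fin (e + 1) → Fin n}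
    (hk : IsWalk A B j i k) : walkWeight A B j k ≠ 0 :=
  mul_ne_zero hk.2.1 (Finset.prod_ne_zero_iff.2 fun t _ => hk.2.2 t)

lemma walkWeight_eq_zero_of_not_isWalk {e : ℕ} {k : Fin (e + 1) → Fin n}
    (hk : ¬IsWalk A B j (k (Fin.last e)) k) : walkWeight A B j k = 0 := by
  simp only [IsWalk, true_and, not_and_or, not_forall, not_not] at hk
  rcases hk with hB | ⟨t, hA⟩
  · simp [walkWeight, hB]
  · exact mul_eq_zero_of_right _ (Finset.prod_eq_zero (Finset.mem_univ t) hA)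

variable (A B j)

lemma walkWeight_snoc {e : ℕ} (k : Fin (e + 1) → Fin n) (x : Fin n) :
    walkWeight A B j (Fin.snoc k x : Fin (e + 2) → Fin n) =
      A x (k (Fin.last e)) * walkWeight A B j k := by
  simp only [walkWeight, Fin.prod_univ_castSucc, Fin.succ_castSucc, Fin.snoc_castSucc,
    Fin.succ_last, Fin.snoc_last, ← Fin.castSucc_zero (n := e + 1)]
  ring

lemma rho_succ_eq_sum (e : ℕ) (i : Fin n) :
    rho A B j i (e + 1) =
      ∑ k : Fin (e + 1) → Fin n, if k (Fin.last e) = i then walkWeight A B j k else 0 := by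
  refine Finset.sum_congr rfl fun k _ => ?_
  by_cases hk : IsWalk A B j (k (Fin.last e)) k
  · have hiff : IsWalk A B j i k ↔ k (Fin.last e) = i := ⟨fun h => h.1, fun h => h ▸ hk⟩
    simp only [hiff]
  · have hi : ¬IsWalk A B j i k := fun h => hk (h.1 ▸ h)
    simp [hi, walkWeight_eq_zero_of_not_isWalk hk]

theorem rho_succ_eq_pow_mul (e : ℕ) (i : Fin n) : rho A B j i (e + 1) = (A ^ e * B) i j := by
  rw [rho_succ_eq_sum]
  induction e generalizing i with
  | zero =>
    rw [← (Equiv.funUnique (Fin 1) (Fin n)).symm.sum_comp]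
    simp [walkWeight]
  | succ e ih =>
    have hsnoc (x : Fin n) (k : Fin (e + 1) → Fin n) :
        (Fin.snocEquiv fun _ => Fin n) (x, k) = Fin.snoc k x := rfl
    rw [← (Fin.snocEquiv fun _ => Fin n).sum_comp, Fintype.sum_prod_type, Finset.sum_comm]
    simp only [hsnoc, Fin.snoc_last, walkWeight_snoc, Finset.sum_ite_eq', Finset.mem_univ,
      if_true]
    rw [pow_succ', Matrix.mul_assoc, Matrix.mul_apply]
    simp only [← ih, Finset.mul_sum, mul_ite, mul_zero]
    rw [Finset.sum_comm]
    simp only [Finset.sum_ite_eq, Finset.mem_univ, if_true]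

end Walks

-- Transfers sign patterns to `SignType.sign`, which, unlike `Real.sign`, is a `signHom`.
lemma Real.sign_eq_sign_iff (x y : ℝ) :
    Real.sign x = Real.sign y ↔ SignType.sign x = SignType.sign y := by
  rcases lt_trichotomy x 0 with hx | rfl | hx <;> rcases lt_trichotomy y 0 with hy | rfl | hy <;>
    simp [Real.sign_of_neg, Real.sign_of_pos, *] <;> norm_num

namespace SamePattern

variable {n m : ℕ} {A A' : Matrix (Fin n) (Fin n) ℝ} {B B' : Matrix (Fin n) (Fin m) ℝ}

lemma sign_A (h : SamePattern A A' B B') (p q : Fin n) :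
    SignType.sign (A' p q) = SignType.sign (A p q) :=
  (Real.sign_eq_sign_iff _ _).1 (h.1 p q)

lemma sign_B (h : SamePattern A A' B B') (p : Fin n) (q : Fin m) :
    SignType.sign (B' p q) = SignType.sign (B p q) :=
  (Real.sign_eq_sign_iff _ _).1 (h.2 p q)

lemma sign_walkWeight (h : SamePattern A A' B B') (j : Fin m) {e : ℕ}
    (k : Fin (e + 1) → Fin n) :
    SignType.sign (walkWeight A' B' j k) = SignType.sign (walkWeight A B j k) := by
  simp only [walkWeight, sign_mul, h.sign_B, ← signHom_apply, map_prod]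
  simp only [signHom_apply, h.sign_A]

lemma isWalk_iff (h : SamePattern A A' B B') {j : Fin m} {i : Fin n} {e : ℕ}
    {k : Fin (e + 1) → Fin n} : IsWalk A' B' j i k ↔ IsWalk A B j i k := by
  simp only [IsWalk, ← sign_ne_zero (a := A' _ _), ← sign_ne_zero (a := B' _ _), h.sign_A,
    h.sign_B, sign_ne_zero]

lemma pset_eq (h : SamePattern A A' B B') (j : Fin m) (d : ℕ) :
    Pset A' B' j d = Pset A B j d := by
  cases d with
  | zero => rfl
  | succ e => simp only [Pset, h.isWalk_iff, ← sign_eq_one_iff, h.sign_walkWeight]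

lemma nset_eq (h : SamePattern A A' B B') (j : Fin m) (d : ℕ) :
    Nset A' B' j d = Nset A B j d := by
  cases d with
  | zero => rfl
  | succ e => simp only [Nset, h.isWalk_iff, ← sign_eq_neg_one_iff, h.sign_walkWeight]

end SamePattern

section Negation

variable {n m : ℕ} (A : Matrix (Fin n) (Fin n) ℝ) (B : Matrix (Fin n) (Fin m) ℝ) (j : Fin m)

lemma isWalk_neg_iff {i : Fin n} {e : ℕ} {k : Fin (e + 1) → Fin n} :
    IsWalk A (-B) j i k ↔ IsWalk A B j i k := by
  simp only [IsWalk, Matrix.neg_apply, neg_ne_zero]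

lemma walkWeight_neg {e : ℕ} (k : Fin (e + 1) → Fin n) :
    walkWeight A (-B) j k = -walkWeight A B j k := by
  simp only [walkWeight, Matrix.neg_apply, neg_mul]

lemma nset_neg (d : ℕ) : Nset A (-B) j d = Pset A B j d := by
  cases d with
  | zero => rfl
  | succ e => simp only [Nset, Pset, isWalk_neg_iff, walkWeight_neg, neg_lt_zero]

lemma pset_neg (d : ℕ) : Pset A (-B) j d = Nset A B j d := by
  simpa only [neg_neg] using (nset_neg A (-B) j d).symm

variable {A B} in
lemma StrictlyHerdable.of_neg {i : Fin n} (h : StrictlyHerdable A (-B) i) :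
    StrictlyHerdable A B i := by
  obtain ⟨k, ⟨y, hy⟩, hk, hki⟩ := h
  refine ⟨k, ⟨-y, ?_⟩, hk, hki⟩
  have hctrb : ctrb A (-B) = -ctrb A B := by
    ext i p
    simp [ctrb, Matrix.mul_neg]
  rwa [Matrix.mulVec_neg, ← Matrix.neg_mulVec, ← hctrb]

end Negation

section Herdability

variable {n m : ℕ} {A : Matrix (Fin n) (Fin n) ℝ} {B : Matrix (Fin n) (Fin m) ℝ} {j : Fin m}

lemma unisigned_of_nonneg {k : Fin n → ℝ} (hk : 0 ≤ k) : Unisigned k := fun a b ha hb => by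
  rw [Real.sign_of_pos ((hk a).lt_of_ne' ha), Real.sign_of_pos ((hk b).lt_of_ne' hb)]

lemma strictlyHerdable_of_col_nonneg {e : ℕ} (he : e < n) {i : Fin n}
    (hnonneg : ∀ i', 0 ≤ (A ^ e * B) i' j) (hpos : 0 < (A ^ e * B) i j) :
    StrictlyHerdable A B i :=
  ⟨(ctrb A B).col (⟨e, he⟩, j), ⟨_, Matrix.mulVec_single_one _ _⟩, unisigned_of_nonneg hnonneg,
    hpos.ne'⟩

lemma walkWeight_pos_of_nset_eq_empty {e : ℕ} (hN : Nset A B j (e + 1) = ∅) {i : Fin n}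
    {k : Fin (e + 1) → Fin n} (hk : IsWalk A B j i k) : 0 < walkWeight A B j k := by
  refine hk.walkWeight_ne_zero.lt_of_le' (not_lt.1 fun hneg => ?_)
  exact (Set.eq_empty_iff_forall_notMem.1 hN) i ⟨k, hk, hneg⟩

lemma rho_nonneg_of_nset_eq_empty {d : ℕ} (hN : Nset A B j d = ∅) (i : Fin n) :
    0 ≤ rho A B j i d := by
  cases d with
  | zero => exact le_rfl
  | succ e =>
    refine Finset.sum_nonneg fun k _ => ?_
    split_ifs with hk
    exacts [(walkWeight_pos_of_nset_eq_empty hN hk).le, le_rfl]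

lemma rho_pos_of_mem_pset {d : ℕ} (hN : Nset A B j d = ∅) {i : Fin n}
    (hi : i ∈ Pset A B j d) : 0 < rho A B j i d := by
  cases d with
  | zero => exact absurd hi (Set.notMem_empty i)
  | succ e =>
    obtain ⟨k, hk, -⟩ := hi
    refine Finset.sum_pos' (fun k' _ => ?_) ⟨k, Finset.mem_univ k, ?_⟩
    · split_ifs with hk'
      exacts [(walkWeight_pos_of_nset_eq_empty hN hk').le, le_rfl]
    · rw [if_pos hk]
      exact walkWeight_pos_of_nset_eq_empty hN hk

theorem strictlyHerdable_of_nset_eq_empty {d : ℕ} (hd : 1 ≤ d) (hdn : d ≤ n)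
    (hN : Nset A B j d = ∅) {i : Fin n} (hi : i ∈ Pset A B j d) : StrictlyHerdable A B i := by
  obtain ⟨e, rfl⟩ := Nat.exists_eq_add_of_le' hd
  refine strictlyHerdable_of_col_nonneg (j := j) hdn (fun i' => ?_) ?_
  · exact rho_succ_eq_pow_mul A B j e i' ▸ rho_nonneg_of_nset_eq_empty hN i'
  · exact rho_succ_eq_pow_mul A B j e i ▸ rho_pos_of_mem_pset hN hi

end Herdability

/-- If for state `i` there are `d ∈ {1,…,n}` and an input `j` such that
`i ∈ N_d^j ∪ P_d^j` and exactly one of `N_d^j`, `P_d^j` is empty, then `i` is sign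
strictly herdable: it is strictly herdable for every pair with the same sign pattern. -/
theorem signStrictlyHerdable_of_unisigned_walks {n m : ℕ}
    (A : Matrix (Fin n) (Fin n) ℝ) (B : Matrix (Fin n) (Fin m) ℝ) (i : Fin n)
    (h : ∃ (d : ℕ) (j : Fin m), 1 ≤ d ∧ d ≤ n ∧ i ∈ Nset A B j d ∪ Pset A B j d ∧
      Xor' (Nset A B j d = ∅) (Pset A B j d = ∅)) :
    ∀ (A' : Matrix (Fin n) (Fin n) ℝ) (B' : Matrix (Fin n) (Fin m) ℝ),
      SamePattern A A' B B' → StrictlyHerdable A' B' i := by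
  intro A' B' hAB
  obtain ⟨d, j, hd, hdn, hi, ⟨hN, -⟩ | ⟨hP, -⟩⟩ := h
  · have hiP : i ∈ Pset A B j d := by simpa [hN] using hi
    rw [← hAB.nset_eq] at hN
    rw [← hAB.pset_eq] at hiP
    exact strictlyHerdable_of_nset_eq_empty hd hdn hN hiP
  · have hiN : i ∈ Nset A B j d := by simpa [hP] using hi
    refine StrictlyHerdable.of_neg (strictlyHerdable_of_nset_eq_empty (j := j) hd hdn ?_ ?_)
    · rw [nset_neg, hAB.pset_eq, hP]
    · rwa [pset_neg, hAB.nset_eq]
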